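/- Let φ : ℝ → ℝ be three times continuously differentiable on [a,b] with a < b. Then T_φ(a,b) = ((b-a)³/96) ∫_0^1 t²(1-t)[φ'''(a·t/2 + b·(1-t/2)) - φ'''(b·t/2 + a·(1-t/2))] dt. -/

import Mathlib

/-!
Put `m = (a + b) / 2`. The Simpson defect
`G u = u/3 (φ(m - u) + 4 φ(m) + φ(m + u)) - ∫_{m-u}^{m+u} φ`
satisfies `G 0 = G' 0 = G'' 0 = 0` and `G''' u = u/3 (φ'''(m + u) - φ'''(m - u))`, so Taylor's
formula with integral remainder gives `G h = ∫_0^h (h - u)²/2 G''' u du` for `h = (b - a)/2`; the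
substitution `u = h (1 - t)` turns this into the stated kernel. Since `φ` is only differentiable
within `[a, b]`, it is first replaced by a function with three derivatives on all of `ℝ` that
agrees with it, and whose third derivative agrees with `φ'''`, on `[a, b]`.
-/

open intervalIntegral Set

section Extension

variable {a b : ℝ} {f f' g : ℝ → ℝ}

theorem eqOn_const_add_integral_of_hasDerivWithinAt
    (hf : ∀ x ∈ Icc a b, HasDerivWithinAt f (f' x) (Icc a b) x) (hg : Continuous g)
    (hgf : EqOn g f' (Icc a b)) :
    EqOn (fun x => f a + ∫ t in a..x, g t) f (Icc a b) := by
  intro x hx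
  have hsub : Icc a x ⊆ Icc a b := Icc_subset_Icc le_rfl hx.2
  have hftc : ∫ t in a..x, g t = f x - f a := by
    refine integral_eq_sub_of_hasDeriv_right_of_le hx.1
      (fun y hy => (hf y (hsub hy)).continuousWithinAt.mono hsub) (fun y hy => ?_)
      (hg.intervalIntegrable a x)
    have hy : y ∈ Ioo a b := ⟨hy.1, hy.2.trans_le hx.2⟩
    rw [hgf (Ioo_subset_Icc_self hy)]
    exact ((hf y (Ioo_subset_Icc_self hy)).hasDerivAt (Icc_mem_nhds hy.1 hy.2)).hasDerivWithinAt
  simp only [hftc, add_sub_cancel]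

theorem exists_hasDerivAt_eqOn_of_hasDerivWithinAt
    (hf : ∀ x ∈ Icc a b, HasDerivWithinAt f (f' x) (Icc a b) x) (hg : Continuous g)
    (hgf : EqOn g f' (Icc a b)) :
    ∃ F : ℝ → ℝ, (∀ x, HasDerivAt F (g x) x) ∧ EqOn F f (Icc a b) :=
  ⟨fun x => f a + ∫ t in a..x, g t,
    fun x => (hg.integral_hasStrictDerivAt a x).hasDerivAt.const_add _,
    eqOn_const_add_integral_of_hasDerivWithinAt hf hg hgf⟩

theorem exists_hasDerivAt_three_eqOn_of_hasDerivWithinAt (hab : a ≤ b) {φ φ' φ'' φ''' : ℝ → ℝ}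
    (hφ' : ∀ x ∈ Icc a b, HasDerivWithinAt φ (φ' x) (Icc a b) x)
    (hφ'' : ∀ x ∈ Icc a b, HasDerivWithinAt φ' (φ'' x) (Icc a b) x)
    (hφ''' : ∀ x ∈ Icc a b, HasDerivWithinAt φ'' (φ''' x) (Icc a b) x)
    (hcont : ContinuousOn φ''' (Icc a b)) :
    ∃ ψ ψ' ψ'' ψ''' : ℝ → ℝ, (∀ x, HasDerivAt ψ (ψ' x) x) ∧ (∀ x, HasDerivAt ψ' (ψ'' x) x) ∧
      (∀ x, HasDerivAt ψ'' (ψ''' x) x) ∧ Continuous ψ''' ∧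
      EqOn ψ φ (Icc a b) ∧ EqOn ψ''' φ''' (Icc a b) := by
  have hext : EqOn (IccExtend hab ((Icc a b).domRestrict φ''')) φ''' (Icc a b) :=
    fun x hx => IccExtend_of_mem hab _ hx
  have hc : Continuous (IccExtend hab ((Icc a b).domRestrict φ''')) :=
    hcont.domRestrict.Icc_extend'
  obtain ⟨ψ'', hψ'', hψφ''⟩ := exists_hasDerivAt_eqOn_of_hasDerivWithinAt hφ''' hc hext
  obtain ⟨ψ', hψ', hψφ'⟩ := exists_hasDerivAt_eqOn_of_hasDerivWithinAt hφ''
    (continuous_iff_continuousAt.2 fun x => (hψ'' x).continuousAt) hψφ''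
  obtain ⟨ψ, hψ, hψφ⟩ := exists_hasDerivAt_eqOn_of_hasDerivWithinAt hφ'
    (continuous_iff_continuousAt.2 fun x => (hψ' x).continuousAt) hψφ'
  exact ⟨ψ, ψ', ψ'', _, hψ, hψ', hψ'', hc, hψφ, hext⟩

end Extension

theorem taylor_integral_remainder_of_hasDerivAt_three {g g' g'' g''' : ℝ → ℝ}
    (hg : ∀ x, HasDerivAt g (g' x) x) (hg' : ∀ x, HasDerivAt g' (g'' x) x)
    (hg'' : ∀ x, HasDerivAt g'' (g''' x) x) (hc : Continuous g''') (a b : ℝ) :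
    g b = g a + g' a * (b - a) + g'' a * (b - a) ^ 2 / 2 +
      ∫ u in a..b, (b - u) ^ 2 / 2 * g''' u := by
  have hF : ∀ x, HasDerivAt (fun x => g x + g' x * (b - x) + g'' x * (b - x) ^ 2 / 2)
      ((b - x) ^ 2 / 2 * g''' x) x := by
    intro x
    have hsub := (hasDerivAt_id' x).const_sub b
    exact (((hg x).fun_add ((hg' x).fun_mul hsub)).fun_add
      (((hg'' x).fun_mul (hsub.fun_pow 2)).div_const 2)).congr_deriv (by ring)
  rw [integral_eq_sub_of_hasDerivAt (fun x _ => hF x)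
    ((by fun_prop : Continuous _).intervalIntegrable a b)]
  ring

section SimpsonDefect

variable {ψ ψ' : ℝ → ℝ} {m : ℝ}

theorem hasDerivAt_comp_add_add_comp_sub (hψ : ∀ x, HasDerivAt ψ (ψ' x) x) (u : ℝ) :
    HasDerivAt (fun u => ψ (m + u) + ψ (m - u)) (ψ' (m + u) - ψ' (m - u)) u := by
  simpa only [← sub_eq_add_neg] using
    ((hψ _).comp_const_add m u).fun_add ((hψ _).comp_const_sub m u)

theorem hasDerivAt_comp_add_sub_comp_sub (hψ : ∀ x, HasDerivAt ψ (ψ' x) x) (u : ℝ) :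
    HasDerivAt (fun u => ψ (m + u) - ψ (m - u)) (ψ' (m + u) + ψ' (m - u)) u := by
  simpa only [sub_neg_eq_add] using
    ((hψ _).comp_const_add m u).fun_sub ((hψ _).comp_const_sub m u)

theorem hasDerivAt_integral_sub_add (hψ : Continuous ψ) (u : ℝ) :
    HasDerivAt (fun u => ∫ t in m - u..m + u, ψ t) (ψ (m + u) + ψ (m - u)) u := by
  have hΨ : ∀ x, HasDerivAt (fun x => ∫ t in m..x, ψ t) (ψ x) x := fun x =>
    (hψ.integral_hasStrictDerivAt m x).hasDerivAt
  convert hasDerivAt_comp_add_sub_comp_sub hΨ u using 2 with v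
  exact (integral_interval_sub_left (hψ.intervalIntegrable _ _) (hψ.intervalIntegrable _ _)).symm

noncomputable def simpsonDefect (ψ : ℝ → ℝ) (m u : ℝ) : ℝ :=
  u / 3 * (ψ (m + u) + ψ (m - u) + 4 * ψ m) - ∫ t in m - u..m + u, ψ t

theorem simpsonDefect_eq_integral {ψ'' ψ''' : ℝ → ℝ} (hψ : ∀ x, HasDerivAt ψ (ψ' x) x)
    (hψ' : ∀ x, HasDerivAt ψ' (ψ'' x) x) (hψ'' : ∀ x, HasDerivAt ψ'' (ψ''' x) x)
    (hc : Continuous ψ''') (m h : ℝ) :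
    simpsonDefect ψ m h =
      ∫ u in 0..h, (h - u) ^ 2 / 2 * (u / 3 * (ψ''' (m + u) - ψ''' (m - u))) := by
  have hψc : Continuous ψ := continuous_iff_continuousAt.2 fun x => (hψ x).continuousAt
  have hG : ∀ u, HasDerivAt (simpsonDefect ψ m)
      (4 / 3 * ψ m - 2 / 3 * (ψ (m + u) + ψ (m - u)) + u / 3 * (ψ' (m + u) - ψ' (m - u))) u := by
    intro u
    exact ((((hasDerivAt_id' u).div_const 3).fun_mul
      ((hasDerivAt_comp_add_add_comp_sub hψ u).add_const (4 * ψ m))).fun_sub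
        (hasDerivAt_integral_sub_add hψc u)).congr_deriv (by ring)
  have hG' : ∀ u, HasDerivAt
      (fun u => 4 / 3 * ψ m - 2 / 3 * (ψ (m + u) + ψ (m - u)) + u / 3 * (ψ' (m + u) - ψ' (m - u)))
      (-(1 / 3) * (ψ' (m + u) - ψ' (m - u)) + u / 3 * (ψ'' (m + u) + ψ'' (m - u))) u := by
    intro u
    exact ((((hasDerivAt_comp_add_add_comp_sub hψ u).const_mul (2 / 3)).const_sub
      (4 / 3 * ψ m)).fun_add (((hasDerivAt_id' u).div_const 3).fun_mul
        (hasDerivAt_comp_add_sub_comp_sub hψ' u))).congr_deriv (by ring)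
  have hG'' : ∀ u, HasDerivAt
      (fun u => -(1 / 3) * (ψ' (m + u) - ψ' (m - u)) + u / 3 * (ψ'' (m + u) + ψ'' (m - u)))
      (u / 3 * (ψ''' (m + u) - ψ''' (m - u))) u := by
    intro u
    exact (((hasDerivAt_comp_add_sub_comp_sub hψ' u).const_mul (-(1 / 3))).fun_add
      (((hasDerivAt_id' u).div_const 3).fun_mul
        (hasDerivAt_comp_add_add_comp_sub hψ'' u))).congr_deriv (by ring)
  rw [taylor_integral_remainder_of_hasDerivAt_three hG hG' hG'' (by fun_prop) 0 h]
  simp only [simpsonDefect, add_zero, sub_zero, sub_self, zero_div, zero_mul, integral_same]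
  ring

end SimpsonDefect

theorem simpson_identity_of_hasDerivAt {a b : ℝ} (hab : a ≠ b) {ψ ψ' ψ'' ψ''' : ℝ → ℝ}
    (hψ : ∀ x, HasDerivAt ψ (ψ' x) x) (hψ' : ∀ x, HasDerivAt ψ' (ψ'' x) x)
    (hψ'' : ∀ x, HasDerivAt ψ'' (ψ''' x) x) (hc : Continuous ψ''') :
    (ψ a + ψ b) / 6 + 2 / 3 * ψ ((a + b) / 2) - (1 / (b - a)) * ∫ t in a..b, ψ t =
      ((b - a) ^ 3 / 96) * ∫ t in (0:ℝ)..1, t ^ 2 * (1 - t) *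
          (ψ''' (a * (t / 2) + b * (1 - t / 2)) - ψ''' (b * (t / 2) + a * (1 - t / 2))) := by
  set m := (a + b) / 2
  set h := (b - a) / 2
  have hh : h ≠ 0 := div_ne_zero (sub_ne_zero.2 hab.symm) two_ne_zero
  set K := fun u => (h - u) ^ 2 / 2 * (u / 3 * (ψ''' (m + u) - ψ''' (m - u)))
  have hdefect : simpsonDefect ψ m h = h / 3 * (ψ a + 4 * ψ m + ψ b) - ∫ t in a..b, ψ t := by
    rw [simpsonDefect, show m - h = a by ring, show m + h = b by ring]
    ring
  have hsubst : ∫ u in 0..h, K u = h * ∫ t in (0:ℝ)..1, K (h - h * t) := by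
    rw [integral_comp_sub_mul K hh, smul_eq_mul, mul_inv_cancel_left₀ hh]
    simp
  have hK : ∀ t, K (h - h * t) = h ^ 3 / 6 * (t ^ 2 * (1 - t) *
      (ψ''' (a * (t / 2) + b * (1 - t / 2)) - ψ''' (b * (t / 2) + a * (1 - t / 2)))) := by
    intro t
    simp only [K, show m + (h - h * t) = a * (t / 2) + b * (1 - t / 2) by ring,
      show m - (h - h * t) = b * (t / 2) + a * (1 - t / 2) by ring]
    ring
  have key := simpsonDefect_eq_integral hψ hψ' hψ'' hc m h
  rw [hdefect, hsubst, funext hK, integral_const_mul] at key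
  rw [show b - a = 2 * h by ring]
  generalize ∫ t in a..b, ψ t = A at key ⊢
  generalize (∫ t in (0:ℝ)..1, t ^ 2 * (1 - t) *
    (ψ''' (a * (t / 2) + b * (1 - t / 2)) - ψ''' (b * (t / 2) + a * (1 - t / 2)))) = I at key ⊢
  rw [show A = h * ((ψ a + 4 * ψ m + ψ b) / 3 - h ^ 3 / 6 * I) by linarith]
  field_simp
  ring

theorem simpson_stmt7 (a b : ℝ) (hab : a < b) (φ φ' φ'' φ''' : ℝ → ℝ)
    (hφ' : ∀ x ∈ Set.Icc a b, HasDerivWithinAt φ (φ' x) (Set.Icc a b) x)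
    (hφ'' : ∀ x ∈ Set.Icc a b, HasDerivWithinAt φ' (φ'' x) (Set.Icc a b) x)
    (hφ''' : ∀ x ∈ Set.Icc a b, HasDerivWithinAt φ'' (φ''' x) (Set.Icc a b) x)
    (hcont : ContinuousOn φ''' (Set.Icc a b)) :
    (φ a + φ b) / 6 + 2 / 3 * φ ((a + b) / 2) - (1 / (b - a)) * ∫ t in a..b, φ t =
      ((b - a) ^ 3 / 96) *
        ∫ t in (0:ℝ)..1, t ^ 2 * (1 - t) *
          (φ''' (a * (t / 2) + b * (1 - t / 2)) - φ''' (b * (t / 2) + a * (1 - t / 2))) := by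
  obtain ⟨ψ, ψ', ψ'', ψ''', hψ, hψ', hψ'', hc, hψφ, hψφ'''⟩ :=
    exists_hasDerivAt_three_eqOn_of_hasDerivWithinAt hab.le hφ' hφ'' hφ''' hcont
  have hint : ∫ t in a..b, φ t = ∫ t in a..b, ψ t :=
    integral_congr fun t ht => (hψφ (uIcc_of_le hab.le ▸ ht)).symm
  have hkernel : ∀ t ∈ uIcc (0 : ℝ) 1,
      a * (t / 2) + b * (1 - t / 2) ∈ Icc a b ∧ b * (t / 2) + a * (1 - t / 2) ∈ Icc a b := by
    intro t ht
    rw [uIcc_of_le zero_le_one] at ht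
    refine ⟨⟨?_, ?_⟩, ⟨?_, ?_⟩⟩ <;> nlinarith [ht.1, ht.2]
  rw [← hψφ (left_mem_Icc.2 hab.le), ← hψφ (right_mem_Icc.2 hab.le),
    ← hψφ ⟨by linarith, by linarith⟩, hint,
    integral_congr (a := 0) (b := 1) fun t ht => by
      rw [← hψφ''' (hkernel t ht).1, ← hψφ''' (hkernel t ht).2]]
  exact simpson_identity_of_hasDerivAt hab.ne hψ hψ' hψ'' hc
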